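/- arXiv:2403.17548 — 2 statements merged into one kernel-verified Lean document; each statement's English description precedes it below -/
import Mathlib

section
/- For m ≥ 3, the canonical form of the neural ideal of the chain code C_m = {∅, {1}, {1,2}, ..., {1,...,m-1}} on m-1 neurons is CF(C_m) = {x_i(1 - x_j) : i, j ∈ [m-1], i > j}. -/
open MvPolynomial

/-- `ρ_v = ∏_{i ∈ v} x_i ∏_{j ∈ [n] \ v} (1 - x_j)` in `F₂[x_1,…,x_n]`
(variables indexed by `{1,…,n} ⊆ ℕ`). -/
noncomputable def rho (n : ℕ) (v : Finset ℕ) : MvPolynomial ℕ (ZMod 2) :=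
  ∏ i ∈ Finset.Icc 1 n, if i ∈ v then X i else (1 - X i)

/-- The neural ideal `J_C = ⟨ρ_v : v ⊆ [n], v ∉ C⟩` of a code `C` on `n` neurons. -/
noncomputable def neuralIdeal (n : ℕ) (C : Set (Finset ℕ)) : Ideal (MvPolynomial ℕ (ZMod 2)) :=
  Ideal.span {p | ∃ v : Finset ℕ, v ⊆ Finset.Icc 1 n ∧ v ∉ C ∧ p = rho n v}

/-- A pseudo-monomial: `∏_{i ∈ σ} x_i ∏_{j ∈ τ} (1 - x_j)` with `σ ∩ τ = ∅`. -/
def IsPseudoMonomial (f : MvPolynomial ℕ (ZMod 2)) : Prop :=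
  ∃ σ τ : Finset ℕ, Disjoint σ τ ∧
    f = (∏ i ∈ σ, X i) * ∏ j ∈ τ, (1 - X j)

/-- `f` is a minimal pseudo-monomial of the ideal `J`: a pseudo-monomial in `J` such
that no pseudo-monomial `g ∈ J` of strictly smaller degree satisfies `f = h * g`. -/
def IsMinimalPseudoMonomial (J : Ideal (MvPolynomial ℕ (ZMod 2)))
    (f : MvPolynomial ℕ (ZMod 2)) : Prop :=
  IsPseudoMonomial f ∧ f ∈ J ∧
    ¬ ∃ g, IsPseudoMonomial g ∧ g ∈ J ∧ g.totalDegree < f.totalDegree ∧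
      ∃ h, f = h * g

/-- The canonical form `CF(C)`: the set of all minimal pseudo-monomials of `J_C`. -/
noncomputable def CF (n : ℕ) (C : Set (Finset ℕ)) : Set (MvPolynomial ℕ (ZMod 2)) :=
  {f | IsMinimalPseudoMonomial (neuralIdeal n C) f}

/-- The chain code `C_m = {∅, {1}, {1,2}, …, {1,…,m-1}}`. -/
def chainCode (m : ℕ) : Set (Finset ℕ) :=
  {s | ∃ i < m, s = Finset.Icc 1 i}

/-!
Write `n = m - 1` and `x^σ (1 - x)^τ` for a pseudo-monomial. When `σ, τ ⊆ [n]` are disjoint,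
`x^σ (1 - x)^τ` is the sum of the `ρ_v` over `σ ⊆ v ⊆ [n] \ τ`; hence `x_i (1 - x_j) ∈ J_C` for
`j < i`, since no initial segment `[1, l]` contains `i` but not `j`. Conversely, every element of
`J_C` vanishes at the characteristic vector of each codeword. If every index of `σ ∩ [n]`
preceded every index of `τ ∩ [n]`, then `[1, max (σ ∩ [n])] ∪ σ` would meet `[n]` in a codeword
while `x^σ (1 - x)^τ` equals `1` there. So each pseudo-monomial of `J_C` is divisible by some
`x_i (1 - x_j)` with `j < i`, and these have the least possible degree, `2`.
-/

open Finset

namespace MvPolynomial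

variable {σ R : Type*} [CommRing R]

theorem totalDegree_prod_of_isDomain [IsDomain R] {ι : Type*} (s : Finset ι)
    (f : ι → MvPolynomial σ R) (hf : ∀ i ∈ s, f i ≠ 0) :
    (∏ i ∈ s, f i).totalDegree = ∑ i ∈ s, (f i).totalDegree := by
  classical
  induction s using Finset.induction_on with
  | empty => simp
  | insert a s ha ih =>
    have hs : ∀ i ∈ s, f i ≠ 0 := fun i hi => hf i (mem_insert_of_mem hi)
    rw [prod_insert ha, sum_insert ha, totalDegree_mul_of_isDomain (hf a (mem_insert_self a s))
      (prod_ne_zero_iff.2 hs), ih hs]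

theorem totalDegree_one_sub_X [Nontrivial R] (i : σ) :
    (1 - X i : MvPolynomial σ R).totalDegree = 1 := by
  rw [sub_eq_neg_add, totalDegree_add_eq_left_of_totalDegree_lt] <;>
    simp [totalDegree_neg, totalDegree_X]

end MvPolynomial

open MvPolynomial

noncomputable def pseudoMonomial (σ τ : Finset ℕ) : MvPolynomial ℕ (ZMod 2) :=
  (∏ i ∈ σ, X i) * ∏ j ∈ τ, (1 - X j)

theorem isPseudoMonomial_iff {f : MvPolynomial ℕ (ZMod 2)} :
    IsPseudoMonomial f ↔ ∃ σ τ, Disjoint σ τ ∧ f = pseudoMonomial σ τ :=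
  Iff.rfl

theorem isPseudoMonomial_pseudoMonomial {σ τ : Finset ℕ} (hd : Disjoint σ τ) :
    IsPseudoMonomial (pseudoMonomial σ τ) :=
  ⟨σ, τ, hd, rfl⟩

theorem pseudoMonomial_singleton (i j : ℕ) : pseudoMonomial {i} {j} = X i * (1 - X j) := by
  simp [pseudoMonomial]

theorem totalDegree_pseudoMonomial (σ τ : Finset ℕ) :
    (pseudoMonomial σ τ).totalDegree = #σ + #τ := by
  have hX : ∀ i ∈ σ, (X i : MvPolynomial ℕ (ZMod 2)) ≠ 0 := fun i _ => X_ne_zero i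
  have hsub : ∀ j ∈ τ, (1 - X j : MvPolynomial ℕ (ZMod 2)) ≠ 0 := fun j _ h => by
    simpa [h] using totalDegree_one_sub_X (R := ZMod 2) j
  rw [pseudoMonomial, totalDegree_mul_of_isDomain (prod_ne_zero_iff.2 hX)
    (prod_ne_zero_iff.2 hsub), totalDegree_prod_of_isDomain _ _ hX,
    totalDegree_prod_of_isDomain _ _ hsub]
  simp [totalDegree_X, totalDegree_one_sub_X]

theorem pseudoMonomial_dvd {σ τ σ' τ' : Finset ℕ} (hσ : σ' ⊆ σ) (hτ : τ' ⊆ τ) :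
    pseudoMonomial σ' τ' ∣ pseudoMonomial σ τ :=
  mul_dvd_mul (prod_dvd_prod_of_subset _ _ _ hσ) (prod_dvd_prod_of_subset _ _ _ hτ)

theorem IsMinimalPseudoMonomial.totalDegree_le {J : Ideal (MvPolynomial ℕ (ZMod 2))}
    {f g : MvPolynomial ℕ (ZMod 2)} (hf : IsMinimalPseudoMonomial J f) (hg : IsPseudoMonomial g)
    (hgJ : g ∈ J) (hgf : g ∣ f) : f.totalDegree ≤ g.totalDegree := by
  by_contra! hlt
  obtain ⟨h, rfl⟩ := hgf
  exact hf.2.2 ⟨g, hg, hgJ, hlt, h, mul_comm g h⟩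

theorem rho_eq_pseudoMonomial {n : ℕ} {v : Finset ℕ} (hv : v ⊆ Icc 1 n) :
    rho n v = pseudoMonomial v (Icc 1 n \ v) := by
  rw [rho, prod_ite, filter_mem_eq_inter, inter_eq_right.2 hv, filter_notMem_eq_sdiff,
    pseudoMonomial]

theorem pseudoMonomial_eq_sum_rho {n : ℕ} {σ τ : Finset ℕ} (hσ : σ ⊆ Icc 1 n)
    (hτ : τ ⊆ Icc 1 n) (hd : Disjoint σ τ) :
    pseudoMonomial σ τ = ∑ w ∈ (Icc 1 n \ (σ ∪ τ)).powerset, rho n (σ ∪ w) := by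
  set F := Icc 1 n \ (σ ∪ τ)
  calc pseudoMonomial σ τ = pseudoMonomial σ τ * ∏ t ∈ F, (X t + (1 - X t)) := by simp
    _ = ∑ w ∈ F.powerset,
          pseudoMonomial σ τ * ((∏ t ∈ w, X t) * ∏ t ∈ F \ w, (1 - X t)) := by
      rw [Finset.prod_add, mul_sum]
    _ = _ := sum_congr rfl fun w hw => by
      have hwF : w ⊆ F := mem_powerset.1 hw
      have hσw : Disjoint σ w := (disjoint_sdiff.mono_left subset_union_left).mono_right hwF
      have hτw : Disjoint τ (F \ w) :=
        (disjoint_sdiff.mono_left subset_union_right).mono_right sdiff_subset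
      have hcompl : Icc 1 n \ (σ ∪ w) = τ ∪ (F \ w) := by
        ext t
        have := @hσ t; have := @hτ t; have := @hwF t
        have : t ∈ σ → t ∉ τ := fun h => disjoint_left.1 hd h
        simp only [F, mem_sdiff, mem_union] at *
        tauto
      rw [rho_eq_pseudoMonomial (union_subset hσ (hwF.trans sdiff_subset)), pseudoMonomial,
        pseudoMonomial, prod_union hσw, hcompl, prod_union hτw]
      ring

theorem pseudoMonomial_mem_neuralIdeal {n : ℕ} {C : Set (Finset ℕ)} {σ τ : Finset ℕ}
    (hσ : σ ⊆ Icc 1 n) (hτ : τ ⊆ Icc 1 n) (hd : Disjoint σ τ)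
    (hC : ∀ v ⊆ Icc 1 n, σ ⊆ v → Disjoint τ v → v ∉ C) :
    pseudoMonomial σ τ ∈ neuralIdeal n C := by
  rw [pseudoMonomial_eq_sum_rho hσ hτ hd]
  refine Ideal.sum_mem _ fun w hw => ?_
  have hw : w ⊆ Icc 1 n \ (σ ∪ τ) := mem_powerset.1 hw
  have hv : σ ∪ w ⊆ Icc 1 n := union_subset hσ (hw.trans sdiff_subset)
  have hτw : Disjoint τ w := (disjoint_sdiff.mono_left subset_union_right).mono_right hw
  exact Ideal.subset_span
    ⟨σ ∪ w, hv, hC _ hv subset_union_left (disjoint_union_right.2 ⟨hd.symm, hτw⟩), rfl⟩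

def charVec (S : Finset ℕ) : ℕ → ZMod 2 := fun t => if t ∈ S then 1 else 0

theorem eval_charVec_pseudoMonomial (S σ τ : Finset ℕ) :
    eval (charVec S) (pseudoMonomial σ τ) = if σ ⊆ S ∧ Disjoint τ S then 1 else 0 := by
  have h1 : ∀ j, eval (charVec S) (1 - X j) = if j ∉ S then 1 else 0 := fun j => by
    by_cases hj : j ∈ S <;> simp [charVec, hj]
  simp only [pseudoMonomial, map_mul, map_prod, eval_X, charVec, h1, prod_boole,
    ite_zero_mul_ite_zero, mul_one, subset_iff, disjoint_left]

theorem eval_charVec_eq_zero_of_mem_neuralIdeal {n : ℕ} {C : Set (Finset ℕ)} {S : Finset ℕ}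
    (hS : S ∩ Icc 1 n ∈ C) {f : MvPolynomial ℕ (ZMod 2)} (hf : f ∈ neuralIdeal n C) :
    eval (charVec S) f = 0 := by
  refine (Ideal.span_le (I := RingHom.ker _)).2 ?_ hf
  rintro _ ⟨v, hv, hvC, rfl⟩
  rw [SetLike.mem_coe, RingHom.mem_ker, rho_eq_pseudoMonomial hv, eval_charVec_pseudoMonomial,
    if_neg]
  rintro ⟨hvS, hvS'⟩
  refine hvC ((?_ : S ∩ Icc 1 n = v) ▸ hS)
  ext t
  refine ⟨fun ht => ?_, fun htv => mem_inter.2 ⟨hvS htv, hv htv⟩⟩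
  by_contra htv
  exact disjoint_left.1 hvS' (mem_sdiff.2 ⟨(mem_inter.1 ht).2, htv⟩) (mem_inter.1 ht).1

theorem exists_lt_of_pseudoMonomial_mem_neuralIdeal_chainCode {n : ℕ} {σ τ : Finset ℕ}
    (hd : Disjoint σ τ) (h : pseudoMonomial σ τ ∈ neuralIdeal n (chainCode (n + 1))) :
    ∃ i ∈ σ ∩ Icc 1 n, ∃ j ∈ τ ∩ Icc 1 n, j < i := by
  by_contra! hle
  set k := (σ ∩ Icc 1 n).sup id
  have hσk : ∀ i ∈ σ ∩ Icc 1 n, i ≤ k := fun i hi => le_sup (f := id) hi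
  have hkn : k ≤ n := Finset.sup_le fun i hi => (mem_Icc.1 (mem_inter.1 hi).2).2
  have hkτ : ∀ j ∈ τ ∩ Icc 1 n, k < j := fun j hj => by
    refine (Finset.sup_lt_iff (Nat.bot_eq_zero ▸ (mem_Icc.1 (mem_inter.1 hj).2).1)).2
      fun i hi => lt_of_le_of_ne (hle i hi j hj) fun hij => ?_
    exact disjoint_left.1 hd (mem_inter.1 hi).1 ((show i = j from hij) ▸ (mem_inter.1 hj).1)
  have hS : (Icc 1 k ∪ σ) ∩ Icc 1 n ∈ chainCode (n + 1) := by
    refine ⟨k, by omega, ?_⟩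
    ext t
    have := hσk t
    simp only [mem_inter, mem_union, mem_Icc] at this ⊢
    grind
  have hτS : Disjoint τ (Icc 1 k ∪ σ) := by
    refine disjoint_union_right.2 ⟨disjoint_left.2 fun j hj hjk => ?_, hd.symm⟩
    have := hkτ j (mem_inter.2 ⟨hj, Icc_subset_Icc_right hkn hjk⟩)
    have := (mem_Icc.1 hjk).2
    omega
  have := eval_charVec_eq_zero_of_mem_neuralIdeal hS h
  rw [eval_charVec_pseudoMonomial, if_pos ⟨subset_union_right, hτS⟩] at this
  exact one_ne_zero this

theorem two_le_totalDegree_of_mem_neuralIdeal_chainCode {n : ℕ} {g : MvPolynomial ℕ (ZMod 2)}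
    (hg : IsPseudoMonomial g) (hgJ : g ∈ neuralIdeal n (chainCode (n + 1))) :
    2 ≤ g.totalDegree := by
  obtain ⟨σ, τ, hd, rfl⟩ := isPseudoMonomial_iff.1 hg
  obtain ⟨i, hi, j, hj, -⟩ := exists_lt_of_pseudoMonomial_mem_neuralIdeal_chainCode hd hgJ
  have hσ := card_pos.2 ⟨i, (mem_inter.1 hi).1⟩
  have hτ := card_pos.2 ⟨j, (mem_inter.1 hj).1⟩
  rw [totalDegree_pseudoMonomial]
  omega

theorem pseudoMonomial_singleton_mem_neuralIdeal_chainCode {n i j : ℕ} (hi : i ∈ Icc 1 n)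
    (hj : j ∈ Icc 1 n) (hji : j < i) :
    pseudoMonomial {i} {j} ∈ neuralIdeal n (chainCode (n + 1)) := by
  refine pseudoMonomial_mem_neuralIdeal (singleton_subset_iff.2 hi) (singleton_subset_iff.2 hj)
    (disjoint_singleton.2 hji.ne') fun v _ hiv hjv ⟨l, _, hvl⟩ => ?_
  rw [hvl, singleton_subset_iff, mem_Icc] at hiv
  rw [hvl, disjoint_singleton_left, mem_Icc] at hjv
  exact hjv ⟨(mem_Icc.1 hj).1, by omega⟩

theorem cf_chainCode (m : ℕ) (hm : 3 ≤ m) :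
    CF (m - 1) (chainCode m) =
      {f | ∃ i ∈ Finset.Icc 1 (m - 1), ∃ j ∈ Finset.Icc 1 (m - 1),
        j < i ∧ f = X i * (1 - X j)} := by
  obtain ⟨n, rfl⟩ : ∃ n, m = n + 1 := ⟨m - 1, by omega⟩
  rw [Nat.add_sub_cancel]
  ext f
  simp only [CF, Set.mem_ofPred_eq]
  constructor
  · intro hf
    obtain ⟨σ, τ, hd, rfl⟩ := isPseudoMonomial_iff.1 hf.1
    obtain ⟨i, hi, j, hj, hji⟩ :=
      exists_lt_of_pseudoMonomial_mem_neuralIdeal_chainCode hd hf.2.1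
    obtain ⟨hiσ, hin⟩ := mem_inter.1 hi
    obtain ⟨hjτ, hjn⟩ := mem_inter.1 hj
    have hiσ' : {i} ⊆ σ := singleton_subset_iff.2 hiσ
    have hjτ' : {j} ⊆ τ := singleton_subset_iff.2 hjτ
    have hdeg := hf.totalDegree_le
      (isPseudoMonomial_pseudoMonomial (disjoint_singleton.2 hji.ne'))
      (pseudoMonomial_singleton_mem_neuralIdeal_chainCode hin hjn hji)
      (pseudoMonomial_dvd hiσ' hjτ')
    rw [totalDegree_pseudoMonomial, totalDegree_pseudoMonomial, card_singleton, card_singleton]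
      at hdeg
    have := card_pos.2 ⟨i, hiσ⟩
    have := card_pos.2 ⟨j, hjτ⟩
    obtain rfl : {i} = σ := eq_of_subset_of_card_le hiσ' (by rw [card_singleton]; omega)
    obtain rfl : {j} = τ := eq_of_subset_of_card_le hjτ' (by rw [card_singleton]; omega)
    exact ⟨i, hin, j, hjn, hji, pseudoMonomial_singleton i j⟩
  · rintro ⟨i, hi, j, hj, hji, rfl⟩
    rw [← pseudoMonomial_singleton]
    refine ⟨isPseudoMonomial_pseudoMonomial (disjoint_singleton.2 hji.ne'),
      pseudoMonomial_singleton_mem_neuralIdeal_chainCode hi hj hji, ?_⟩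
    rintro ⟨g, hg, hgJ, hlt, -⟩
    have := two_le_totalDegree_of_mem_neuralIdeal_chainCode hg hgJ
    rw [totalDegree_pseudoMonomial, card_singleton, card_singleton] at hlt
    omega
end

section
/- For k ≥ 4, the canonical form of the neural ideal of CR_k = {{1},...,{k},{1,2},{2,3},...,{k-1,k},{k,1}} is CF(CR_k) = {∏_{i=1}^{k}(1 - x_i)} ∪ {x_i x_j : i > j and i - j ≢ 1 mod k and (i,j) ≠ (k,1)}; that is, the full product ∏(1-x_i) together with x_i x_j for all non-cyclically-consecutive pairs i ≠ j. -/
open MvPolynomial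

/-- The code `CR_k`: all singletons and all cyclically consecutive pairs. -/
def cycleCode (k : ℕ) : Set (Finset ℕ) :=
  {s | ∃ i ∈ Finset.Icc 1 k, s = {i}} ∪
  {s | ∃ i ∈ Finset.Icc 1 k, s = {i, i % k + 1}}


noncomputable def pm (σ τ : Finset ℕ) : MvPolynomial ℕ (ZMod 2) :=
  (∏ i ∈ σ, X i) * ∏ j ∈ τ, (1 - X j)

lemma eval_pm (p : ℕ → ZMod 2) (σ τ : Finset ℕ) :
    eval p (pm σ τ) = (∏ i ∈ σ, p i) * ∏ j ∈ τ, (1 - p j) := by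
  simp [pm]

noncomputable def ind (s : Finset ℕ) : ℕ →₀ ℕ := ∑ i ∈ s, Finsupp.single i 1

lemma ind_apply (s : Finset ℕ) (j : ℕ) : ind s j = if j ∈ s then 1 else 0 := by
  classical
  simp only [ind, Finset.sum_apply', Finsupp.single_apply]
  exact Finset.sum_ite_eq' s j fun _ => 1

lemma ind_inj {s t : Finset ℕ} (h : ind s = ind t) : s = t := by
  ext j
  have hj : ind s j = ind t j := by rw [h]
  rw [ind_apply, ind_apply] at hj
  by_cases h1 : j ∈ s <;> by_cases h2 : j ∈ t <;> simp [h1, h2] at hj ⊢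

lemma ind_sum (s : Finset ℕ) : (ind s).sum (fun _ e => e) = s.card := by
  classical
  induction s using Finset.induction_on with
  | empty => simp [ind]
  | @insert a s ha ih =>
    rw [ind, Finset.sum_insert ha, Finsupp.sum_add_index' (fun _ => rfl) (fun _ _ _ => rfl),
      Finsupp.sum_single_index rfl]
    rw [ind] at ih
    rw [ih, Finset.card_insert_of_notMem ha, add_comm]

lemma prod_X_eq (s : Finset ℕ) :
    (∏ i ∈ s, (X i : MvPolynomial ℕ (ZMod 2))) = monomial (ind s) 1 := by
  rw [ind, monomial_sum_one]
  exact Finset.prod_congr rfl fun i _ => rfl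

lemma one_sub_X (j : ℕ) : (1 - X j : MvPolynomial ℕ (ZMod 2)) = 1 + X j := by
  rw [CharTwo.sub_eq_add]

lemma pm_expand {σ τ : Finset ℕ} (h : Disjoint σ τ) :
    pm σ τ = ∑ t ∈ τ.powerset, monomial (ind (σ ∪ (τ \ t))) 1 := by
  classical
  rw [pm]
  conv_lhs => rw [show (∏ j ∈ τ, (1 - X j : MvPolynomial ℕ (ZMod 2)))
      = ∏ j ∈ τ, ((fun j => (1:MvPolynomial ℕ (ZMod 2))) j + (fun j => X j) j) from
      Finset.prod_congr rfl fun j _ => one_sub_X j]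
  rw [Finset.prod_add, Finset.mul_sum]
  refine Finset.sum_congr rfl fun t ht => ?_
  rw [Finset.prod_const_one, one_mul,
    ← Finset.prod_union (h.mono_right (Finset.sdiff_subset)), prod_X_eq]

lemma pm_totalDegree {σ τ : Finset ℕ} (h : Disjoint σ τ) :
    (pm σ τ).totalDegree = σ.card + τ.card := by
  classical
  refine le_antisymm ?_ ?_
  · refine (totalDegree_mul _ _).trans ?_
    have h1 : (∏ i ∈ σ, (X i : MvPolynomial ℕ (ZMod 2))).totalDegree ≤ σ.card := by
      refine (totalDegree_finset_prod _ _).trans ?_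
      simp [totalDegree_X]
    have h2 : (∏ j ∈ τ, (1 - X j : MvPolynomial ℕ (ZMod 2))).totalDegree ≤ τ.card := by
      refine (totalDegree_finset_prod _ _).trans ?_
      calc ∑ j ∈ τ, (1 - X j : MvPolynomial ℕ (ZMod 2)).totalDegree
          ≤ ∑ _j ∈ τ, 1 := Finset.sum_le_sum fun j _ => by
            rw [one_sub_X]
            exact (totalDegree_add _ _).trans (by simp [totalDegree_X])
        _ = τ.card := by simp
    omega
  · have hc : coeff (ind (σ ∪ τ)) (pm σ τ) = 1 := by
      rw [pm_expand h, coeff_sum]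
      have : ∀ t ∈ τ.powerset,
          coeff (ind (σ ∪ τ)) ((monomial (ind (σ ∪ (τ \ t)))) (1 : ZMod 2))
          = if t = ∅ then 1 else 0 := by
        intro t ht
        rw [coeff_monomial]
        congr 1
        simp only [eq_iff_iff]
        constructor
        · intro he
          have := ind_inj he
          rw [Finset.eq_empty_iff_forall_notMem]
          intro x hx
          have hxτ : x ∈ τ := Finset.mem_powerset.mp ht hx
          have : x ∈ σ ∪ (τ \ t) := this ▸ Finset.mem_union_right _ hxτ
          rcases Finset.mem_union.mp this with h1 | h1
          · exact (Finset.disjoint_left.mp h h1) hxτ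
          · exact (Finset.mem_sdiff.mp h1).2 hx
        · rintro rfl; rw [Finset.sdiff_empty]
      rw [Finset.sum_congr rfl this, Finset.sum_ite_eq' τ.powerset ∅ (fun _ => 1)]
      simp
    have hs : ind (σ ∪ τ) ∈ (pm σ τ).support := by
      rw [mem_support_iff, hc]; exact one_ne_zero
    have := le_totalDegree hs
    rwa [ind_sum, Finset.card_union_of_disjoint h] at this

lemma vanish {k : ℕ} {C : Set (Finset ℕ)} {p : ℕ → ZMod 2} {c : Finset ℕ}
    (hcI : c ⊆ Finset.Icc 1 k) (hcC : c ∈ C)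
    (hp : ∀ i ∈ Finset.Icc 1 k, p i = if i ∈ c then 1 else 0)
    {f : MvPolynomial ℕ (ZMod 2)} (hf : f ∈ neuralIdeal k C) : eval p f = 0 := by
  classical
  have hle : neuralIdeal k C ≤ RingHom.ker (eval p) := by
    rw [neuralIdeal, Ideal.span_le]
    rintro q ⟨v, hvI, hvC, rfl⟩
    have hvc : v ≠ c := fun h => hvC (h ▸ hcC)
    have : ∃ i, ¬ (i ∈ v ↔ i ∈ c) := by
      by_contra hcon
      push_neg at hcon
      exact hvc (Finset.ext fun i => hcon i)
    obtain ⟨i, hi⟩ := this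
    have hiI : i ∈ Finset.Icc 1 k := by
      by_cases h1 : i ∈ v
      · exact hvI h1
      · by_cases h2 : i ∈ c
        · exact hcI h2
        · exact absurd (iff_of_false h1 h2) hi
    have : eval p (rho k v) = 0 := by
      rw [rho, map_prod]
      refine Finset.prod_eq_zero hiI ?_
      by_cases h1 : i ∈ v
      · have h2 : i ∉ c := fun h2 => hi (iff_of_true h1 h2)
        simp [h1, hp i hiI, h2]
      · have h2 : i ∈ c := by
          by_contra h2; exact hi (iff_of_false h1 h2)
        simp [h1, hp i hiI, h2]
    simpa [RingHom.mem_ker] using this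
  simpa [RingHom.mem_ker] using hle hf

lemma star {k : ℕ} {C : Set (Finset ℕ)} (hC : ∀ c ∈ C, c ⊆ Finset.Icc 1 k)
    {σ τ : Finset ℕ} (hd : Disjoint σ τ)
    (hJ : pm σ τ ∈ neuralIdeal k C) {c : Finset ℕ} (hc : c ∈ C)
    (hσ : ∀ i ∈ σ, i ∈ Finset.Icc 1 k → i ∈ c) : ∃ j ∈ τ, j ∈ c := by
  classical
  set p : ℕ → ZMod 2 :=
    fun i => if i ∈ c ∨ (i ∈ σ ∧ i ∉ Finset.Icc 1 k) then 1 else 0 with hpdef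
  have h0 : eval p (pm σ τ) = 0 := by
    refine vanish (hC c hc) hc (fun i hi => ?_) hJ
    simp only [hpdef]
    by_cases h1 : i ∈ c <;> simp [h1, hi]
  by_contra hcon
  push_neg at hcon
  rw [eval_pm] at h0
  have h1 : (∏ i ∈ σ, p i) = 1 := by
    refine Finset.prod_eq_one fun i hi => ?_
    by_cases h2 : i ∈ Finset.Icc 1 k
    · exact if_pos (Or.inl (hσ i hi h2))
    · exact if_pos (Or.inr ⟨hi, h2⟩)
  have h2 : (∏ j ∈ τ, (1 - p j)) = 1 := by
    refine Finset.prod_eq_one fun j hj => ?_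
    have hjc : j ∉ c := hcon j hj
    have hjσ : j ∉ σ := Finset.disjoint_right.mp hd hj
    rw [hpdef]
    simp only []
    rw [if_neg (by tauto)]
    norm_num
  rw [h1, h2] at h0
  simp at h0

lemma pm_mem {k : ℕ} {C : Set (Finset ℕ)} {σ τ : Finset ℕ} (hd : Disjoint σ τ)
    (hσ : σ ⊆ Finset.Icc 1 k) (hτ : τ ⊆ Finset.Icc 1 k)
    (hv : ∀ w ⊆ Finset.Icc 1 k \ (σ ∪ τ), σ ∪ w ∉ C) :
    pm σ τ ∈ neuralIdeal k C := by
  classical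
  set r : Finset ℕ := Finset.Icc 1 k \ (σ ∪ τ) with hrdef
  have hsub : σ ∪ τ ⊆ Finset.Icc 1 k := Finset.union_subset hσ hτ
  have hIcc : (σ ∪ τ) ∪ r = Finset.Icc 1 k := Finset.union_sdiff_of_subset hsub
  have hdisj1 : Disjoint (σ ∪ τ) r := Finset.disjoint_sdiff
  have hsplit : ∀ w ∈ r.powerset, rho k (σ ∪ w)
      = pm σ τ * ((∏ i ∈ w, X i) * ∏ i ∈ r \ w, (1 - X i)) := by
    intro w hw
    have hwr : w ⊆ r := Finset.mem_powerset.mp hw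
    have hwτ : ∀ i ∈ τ, i ∉ w := fun i hi hiw => by
      have : i ∈ r := hwr hiw
      rw [hrdef, Finset.mem_sdiff] at this
      exact this.2 (Finset.mem_union_right _ hi)
    rw [rho, ← hIcc, Finset.prod_union hdisj1, Finset.prod_union hd]
    have e1 : (∏ i ∈ σ, if i ∈ σ ∪ w then (X i : MvPolynomial ℕ (ZMod 2)) else 1 - X i)
        = ∏ i ∈ σ, X i :=
      Finset.prod_congr rfl fun i hi => if_pos (Finset.mem_union_left _ hi)
    have e2 : (∏ i ∈ τ, if i ∈ σ ∪ w then (X i : MvPolynomial ℕ (ZMod 2)) else 1 - X i)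
        = ∏ i ∈ τ, (1 - X i) :=
      Finset.prod_congr rfl fun i hi => if_neg (by
        rw [Finset.mem_union]
        rintro (h | h)
        · exact Finset.disjoint_right.mp hd hi h
        · exact hwτ i hi h)
    have e3 : (∏ i ∈ r, if i ∈ σ ∪ w then (X i : MvPolynomial ℕ (ZMod 2)) else 1 - X i)
        = (∏ i ∈ w, X i) * ∏ i ∈ r \ w, (1 - X i) := by
      have hru : r = w ∪ (r \ w) := (Finset.union_sdiff_of_subset hwr).symm
      conv_lhs => rw [hru]
      rw [Finset.prod_union Finset.disjoint_sdiff]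
      congr 1
      · exact Finset.prod_congr rfl fun i hi => if_pos (Finset.mem_union_right _ hi)
      · refine Finset.prod_congr rfl fun i hi => if_neg ?_
        rw [Finset.mem_sdiff] at hi
        have hirr : i ∈ r := hi.1
        rw [hrdef, Finset.mem_sdiff] at hirr
        rw [Finset.mem_union]
        rintro (h | h)
        · exact hirr.2 (Finset.mem_union_left _ h)
        · exact hi.2 h
    rw [e1, e2, e3, pm]
  have key : pm σ τ = ∑ w ∈ r.powerset, rho k (σ ∪ w) := by
    rw [Finset.sum_congr rfl hsplit, ← Finset.mul_sum]
    have hone : ∑ w ∈ r.powerset,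
        ((∏ i ∈ w, (X i : MvPolynomial ℕ (ZMod 2))) * ∏ i ∈ r \ w, (1 - X i)) = 1 := by
      rw [← Finset.prod_add (fun i => (X i : MvPolynomial ℕ (ZMod 2))) (fun i => 1 - X i) r]
      rw [Finset.prod_congr rfl (fun i _ => show (X i : MvPolynomial ℕ (ZMod 2)) + (1 - X i) = 1 by ring)]
      exact Finset.prod_const_one
    rw [hone, mul_one]
  rw [key]
  refine Ideal.sum_mem _ fun w hw => ?_
  refine Ideal.subset_span ?_
  exact ⟨σ ∪ w, Finset.union_subset hσ ((Finset.mem_powerset.mp hw).trans Finset.sdiff_subset),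
    hv w (Finset.mem_powerset.mp hw), rfl⟩

lemma mem_cycleCode_iff {k : ℕ} {c : Finset ℕ} : c ∈ cycleCode k ↔
    (∃ i ∈ Finset.Icc 1 k, c = {i}) ∨ (∃ i ∈ Finset.Icc 1 k, c = {i, i % k + 1}) :=
  Iff.rfl

lemma succ_mem_Icc {k i : ℕ} (hk : 1 ≤ k) (hi : i ∈ Finset.Icc 1 k) :
    i % k + 1 ∈ Finset.Icc 1 k := by
  rw [Finset.mem_Icc] at *
  have := Nat.mod_lt i (show 0 < k by omega)
  omega

lemma code_subset {k : ℕ} (hk : 1 ≤ k) {c : Finset ℕ} (hc : c ∈ cycleCode k) :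
    c ⊆ Finset.Icc 1 k := by
  rcases mem_cycleCode_iff.mp hc with ⟨i, hi, rfl⟩ | ⟨i, hi, rfl⟩
  · simpa using hi
  · rw [Finset.insert_subset_iff, Finset.singleton_subset_iff]
    exact ⟨hi, succ_mem_Icc hk hi⟩

lemma singleton_mem_code {k i : ℕ} (hi : i ∈ Finset.Icc 1 k) : ({i} : Finset ℕ) ∈ cycleCode k :=
  mem_cycleCode_iff.mpr (Or.inl ⟨i, hi, rfl⟩)

lemma empty_notMem_code {k : ℕ} : (∅ : Finset ℕ) ∉ cycleCode k := by
  intro hc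
  rcases mem_cycleCode_iff.mp hc with ⟨i, _, h⟩ | ⟨i, _, h⟩
  · exact (Finset.singleton_ne_empty i) h.symm
  · exact (Finset.insert_ne_empty _ _) h.symm

lemma code_card {k : ℕ} {c : Finset ℕ} (hc : c ∈ cycleCode k) : c.card ≤ 2 := by
  rcases mem_cycleCode_iff.mp hc with ⟨i, _, rfl⟩ | ⟨i, _, rfl⟩
  · simp
  · exact (Finset.card_insert_le _ _).trans (by simp)

def covered (k a b : ℕ) : Prop := ∃ c ∈ cycleCode k, ({a, b} : Finset ℕ) ⊆ c

lemma covered_symm {k a b : ℕ} (h : covered k a b) : covered k b a := by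
  obtain ⟨c, hc, hsub⟩ := h
  exact ⟨c, hc, by rwa [Finset.pair_comm]⟩

lemma covered_pair_mem {k a b : ℕ} (hab : a ≠ b) (h : covered k a b) :
    ({a, b} : Finset ℕ) ∈ cycleCode k := by
  obtain ⟨c, hc, hsub⟩ := h
  have h2 := code_card hc
  have : ({a, b} : Finset ℕ) = c :=
    Finset.eq_of_subset_of_card_le hsub (by rw [Finset.card_pair hab]; exact h2)
  rw [this]; exact hc

lemma covered_arith {k a b : ℕ} (hk : 4 ≤ k) (ha : a ∈ Finset.Icc 1 k)
    (hb : b ∈ Finset.Icc 1 k) (hab : a ≠ b) (h : covered k a b) :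
    a = b + 1 ∨ b = a + 1 ∨ (a = k ∧ b = 1) ∨ (a = 1 ∧ b = k) := by
  obtain ⟨c, hc, hsub⟩ := h
  have hamem : a ∈ c := hsub (Finset.mem_insert_self _ _)
  have hbmem : b ∈ c := hsub (by simp)
  rcases mem_cycleCode_iff.mp hc with ⟨i, hi, rfl⟩ | ⟨i, hi, rfl⟩
  · rw [Finset.mem_singleton] at hamem hbmem
    exact absurd (hamem.trans hbmem.symm) hab
  · rw [Finset.mem_insert, Finset.mem_singleton] at hamem hbmem
    rw [Finset.mem_Icc] at ha hb hi
    rcases Nat.lt_or_ge i k with hik | hik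
    · rw [Nat.mod_eq_of_lt hik] at hamem hbmem
      omega
    · have : i = k := by omega
      subst this
      rw [Nat.mod_self] at hamem hbmem
      omega

lemma arith_covered {k a b : ℕ} (hk : 4 ≤ k) (ha : a ∈ Finset.Icc 1 k)
    (hb : b ∈ Finset.Icc 1 k) (hba : b < a) (h : a = b + 1 ∨ (a = k ∧ b = 1)) :
    covered k a b := by
  rw [Finset.mem_Icc] at ha hb
  rcases h with rfl | ⟨h1, h2⟩
  · refine ⟨{b, b % k + 1}, mem_cycleCode_iff.mpr (Or.inr ⟨b, Finset.mem_Icc.mpr ⟨hb.1, by omega⟩, rfl⟩), ?_⟩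
    rw [Nat.mod_eq_of_lt (show b < k by omega)]
    intro x hx
    rw [Finset.mem_insert, Finset.mem_singleton] at hx
    rw [Finset.mem_insert, Finset.mem_singleton]
    tauto
  · refine ⟨{k, k % k + 1}, mem_cycleCode_iff.mpr (Or.inr ⟨k, Finset.mem_Icc.mpr ⟨by omega, le_refl k⟩, rfl⟩), ?_⟩
    rw [Nat.mod_self, ← h1, ← h2]
    intro x hx
    rw [Finset.mem_insert, Finset.mem_singleton] at hx
    rw [Finset.mem_insert, Finset.mem_singleton]
    omega
theorem cf_cycleCode (k : ℕ) (hk : 4 ≤ k) :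
    CF k (cycleCode k) =
      {∏ i ∈ Finset.Icc 1 k, (1 - X i)} ∪
      {f | ∃ i ∈ Finset.Icc 1 k, ∃ j ∈ Finset.Icc 1 k,
        j < i ∧ ¬ (i - j) % k = 1 ∧ (i, j) ≠ (k, 1) ∧ f = X i * X j} := by
  classical
  have hk1 : 1 ≤ k := by omega
  have hC : ∀ c ∈ cycleCode k, c ⊆ Finset.Icc 1 k := fun c hc => code_subset hk1 hc
  have hcard_Icc : (Finset.Icc 1 k).card = k := by rw [Nat.card_Icc]; omega
  -- if σ misses [k] entirely then [k] ⊆ τ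
  have htau : ∀ σ τ : Finset ℕ, Disjoint σ τ → pm σ τ ∈ neuralIdeal k (cycleCode k) →
      (∀ i ∈ σ, i ∉ Finset.Icc 1 k) → Finset.Icc 1 k ⊆ τ := by
    intro σ τ hd hJ hσ m hm
    obtain ⟨j, hjτ, hjc⟩ := star hC hd hJ (singleton_mem_code hm)
      (fun i hi hi2 => absurd hi2 (hσ i hi))
    rw [Finset.mem_singleton] at hjc
    rwa [hjc] at hjτ
  -- σ ∩ [k] is not contained in any codeword that is inside σ
  have hnotsub : ∀ σ τ : Finset ℕ, Disjoint σ τ → pm σ τ ∈ neuralIdeal k (cycleCode k) →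
      ∀ c ∈ cycleCode k, c ⊆ σ → ∃ l ∈ σ, l ∈ Finset.Icc 1 k ∧ l ∉ c := by
    intro σ τ hd hJ c hc hcσ
    by_contra hcon
    push_neg at hcon
    obtain ⟨j, hjτ, hjc⟩ := star hC hd hJ hc (fun i hi hi2 => hcon i hi hi2)
    exact absurd (hcσ hjc) (Finset.disjoint_right.mp hd hjτ)
  have hfullJ : pm ∅ (Finset.Icc 1 k) ∈ neuralIdeal k (cycleCode k) := by
    refine pm_mem (Finset.disjoint_left.mpr (by simp)) (Finset.empty_subset _) le_rfl ?_
    intro w hw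
    have hw0 : w = ∅ := Finset.subset_empty.mp (by simpa using hw)
    subst hw0
    simpa using (empty_notMem_code (k := k))
  ext f
  constructor
  · intro hf
    obtain ⟨⟨σ, τ, hd, hfeq⟩, hJ, hmin⟩ := hf
    have hfpm : f = pm σ τ := hfeq
    have hJ' : pm σ τ ∈ neuralIdeal k (cycleCode k) := hfpm ▸ hJ
    have hdegf : (pm σ τ).totalDegree = σ.card + τ.card := pm_totalDegree hd
    by_cases hσI : ∀ i ∈ σ, i ∉ Finset.Icc 1 k
    · -- full product case
      have hIτ : Finset.Icc 1 k ⊆ τ := htau σ τ hd hJ' hσI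
      have hdegg : (pm ∅ (Finset.Icc 1 k)).totalDegree = k := by
        rw [pm_totalDegree (Finset.disjoint_left.mpr (by simp))]
        simp [hcard_Icc]
      have hτeq : (τ \ Finset.Icc 1 k) ∪ Finset.Icc 1 k = τ := Finset.sdiff_union_of_subset hIτ
      have hfac : pm σ τ =
          ((∏ i ∈ σ, X i) * ∏ j ∈ τ \ Finset.Icc 1 k, (1 - X j)) * pm ∅ (Finset.Icc 1 k) := by
        conv_lhs => rw [pm, ← hτeq]
        rw [Finset.prod_union Finset.sdiff_disjoint, pm]
        ring
      have hτk : k ≤ τ.card := hcard_Icc ▸ Finset.card_le_card hIτ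
      have hle : σ.card + τ.card ≤ k := by
        by_contra hcon
        exact hmin ⟨pm ∅ (Finset.Icc 1 k),
          ⟨∅, Finset.Icc 1 k, Finset.disjoint_left.mpr (by simp), by simp [pm]⟩,
          hfullJ, by rw [hdegg, hfpm, hdegf]; omega,
          ⟨_, by rw [hfpm]; exact hfac⟩⟩
      have hσ0 : σ = ∅ := Finset.card_eq_zero.mp (by omega)
      have hτ0 : Finset.Icc 1 k = τ := Finset.eq_of_subset_of_card_le hIτ (by omega)
      refine Set.mem_union_left _ ?_
      rw [Set.mem_singleton_iff, hfpm, hσ0, ← hτ0]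
      simp [pm]
    · push_neg at hσI
      obtain ⟨i, hiσ, hiI⟩ := hσI
      have claim : ∃ a b, a ∈ σ ∧ b ∈ σ ∧ a ∈ Finset.Icc 1 k ∧ b ∈ Finset.Icc 1 k ∧
          b < a ∧ ¬ covered k a b := by
        obtain ⟨j, hjσ, hjI, hji⟩ := hnotsub σ τ hd hJ' {i} (singleton_mem_code hiI)
          (Finset.singleton_subset_iff.mpr hiσ)
        rw [Finset.mem_singleton] at hji
        have build : ∀ a b, a ∈ σ → b ∈ σ → a ∈ Finset.Icc 1 k → b ∈ Finset.Icc 1 k →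
            a ≠ b → ¬ covered k a b →
            ∃ a b, a ∈ σ ∧ b ∈ σ ∧ a ∈ Finset.Icc 1 k ∧ b ∈ Finset.Icc 1 k ∧
              b < a ∧ ¬ covered k a b := by
          intro a b ha hb haI hbI hab hnc
          rcases Nat.lt_or_ge b a with h | h
          · exact ⟨a, b, ha, hb, haI, hbI, h, hnc⟩
          · exact ⟨b, a, hb, ha, hbI, haI, by omega, fun hc => hnc (covered_symm hc)⟩
        by_cases hPij : covered k i j
        · have hcmem : ({i, j} : Finset ℕ) ∈ cycleCode k :=
            covered_pair_mem (fun h => hji h.symm) hPij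
          obtain ⟨l, hlσ, hlI, hlc⟩ := hnotsub σ τ hd hJ' {i, j} hcmem (by
            rw [Finset.insert_subset_iff, Finset.singleton_subset_iff]; exact ⟨hiσ, hjσ⟩)
          rw [Finset.mem_insert, Finset.mem_singleton] at hlc
          push_neg at hlc
          by_cases hPil : covered k i l
          · by_cases hPjl : covered k j l
            · exfalso
              have h1 := covered_arith hk hiI hjI (fun h => hji h.symm) hPij
              have h2 := covered_arith hk hiI hlI (fun h => hlc.1 h.symm) hPil
              have h3 := covered_arith hk hjI hlI (fun h => hlc.2 h.symm) hPjl
              rw [Finset.mem_Icc] at hiI hjI hlI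
              omega
            · exact build j l hjσ hlσ hjI hlI (fun h => hlc.2 h.symm) hPjl
          · exact build i l hiσ hlσ hiI hlI (fun h => hlc.1 h.symm) hPil
        · exact build i j hiσ hjσ hiI hjI (fun h => hji h.symm) hPij
      obtain ⟨a, b, haσ, hbσ, haI, hbI, hba, hnc⟩ := claim
      have habne : a ≠ b := by omega
      have hpairσ : ({a, b} : Finset ℕ) ⊆ σ := by
        rw [Finset.insert_subset_iff, Finset.singleton_subset_iff]; exact ⟨haσ, hbσ⟩
      have hgJ : pm {a, b} ∅ ∈ neuralIdeal k (cycleCode k) := by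
        refine pm_mem (Finset.disjoint_right.mpr (by simp)) ?_ (Finset.empty_subset _) ?_
        · rw [Finset.insert_subset_iff, Finset.singleton_subset_iff]; exact ⟨haI, hbI⟩
        · intro w hw hmem
          exact hnc ⟨{a, b} ∪ w, hmem, Finset.subset_union_left⟩
      have hdegg : (pm {a, b} ∅).totalDegree = 2 := by
        rw [pm_totalDegree (Finset.disjoint_right.mpr (by simp)), Finset.card_pair habne]
        simp
      have hfac : pm σ τ =
          ((∏ i ∈ σ \ {a, b}, X i) * ∏ j ∈ τ, (1 - X j)) * pm {a, b} ∅ := by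
        conv_lhs => rw [pm, ← Finset.sdiff_union_of_subset hpairσ]
        rw [Finset.prod_union Finset.sdiff_disjoint, pm]
        ring
      have h2σ : 2 ≤ σ.card := by
        have := Finset.card_le_card hpairσ
        rwa [Finset.card_pair habne] at this
      have hle : σ.card + τ.card ≤ 2 := by
        by_contra hcon
        exact hmin ⟨pm {a, b} ∅,
          ⟨{a, b}, ∅, Finset.disjoint_right.mpr (by simp), by simp [pm]⟩,
          hgJ, by rw [hdegg, hfpm, hdegf]; omega,
          ⟨_, by rw [hfpm]; exact hfac⟩⟩
      have hτ0 : τ = ∅ := Finset.card_eq_zero.mp (by omega)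
      have hσab : σ = {a, b} :=
        (Finset.eq_of_subset_of_card_le hpairσ (by rw [Finset.card_pair habne]; omega)).symm
      refine Set.mem_union_right _ ?_
      have hb1 := Finset.mem_Icc.mp haI
      have hb2 := Finset.mem_Icc.mp hbI
      refine ⟨a, haI, b, hbI, hba, ?_, ?_, ?_⟩
      · intro hmod
        rw [Nat.mod_eq_of_lt (show a - b < k by omega)] at hmod
        exact hnc (arith_covered hk haI hbI hba (Or.inl (by omega)))
      · intro hpair
        have hp : a = k ∧ b = 1 := by
          constructor
          · exact congrArg Prod.fst hpair
          · exact congrArg Prod.snd hpair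
        exact hnc (arith_covered hk haI hbI hba (Or.inr hp))
      · rw [hfpm, hσab, hτ0]
        simp [pm, Finset.prod_pair habne]
  · intro hf
    rcases hf with hf | hf
    · -- the full product is a minimal pseudo-monomial
      rw [Set.mem_singleton_iff] at hf
      subst hf
      have hfpm : (∏ i ∈ Finset.Icc 1 k, (1 - X i) : MvPolynomial ℕ (ZMod 2))
          = pm ∅ (Finset.Icc 1 k) := by simp [pm]
      refine ⟨⟨∅, Finset.Icc 1 k, Finset.disjoint_left.mpr (by simp), by simp⟩,
        hfpm ▸ hfullJ, ?_⟩
      rintro ⟨g, ⟨σ', τ', hd', rfl⟩, hgJ, hdeg, h, hfac⟩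
      have hgpm : (∏ i ∈ σ', X i) * ∏ j ∈ τ', (1 - X j) = pm σ' τ' := rfl
      have hσ'0 : σ' = ∅ := by
        by_contra hne
        obtain ⟨x, hx⟩ := Finset.nonempty_iff_ne_empty.mpr hne
        have h1 : eval (fun _ => (0 : ZMod 2))
            (∏ i ∈ Finset.Icc 1 k, (1 - X i : MvPolynomial ℕ (ZMod 2))) = 1 := by simp
        rw [hfac, map_mul, map_mul] at h1
        have h2 : (∏ i ∈ σ', eval (fun _ => (0 : ZMod 2)) (X i)) = 0 :=
          Finset.prod_eq_zero hx (by simp)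
        rw [map_prod, h2] at h1
        simp at h1
      subst hσ'0
      have hIτ' : Finset.Icc 1 k ⊆ τ' :=
        htau ∅ τ' (Finset.disjoint_left.mpr (by simp)) (hgpm ▸ hgJ) (by simp)
      have hd1 : ((∏ i ∈ (∅ : Finset ℕ), X i) * ∏ j ∈ τ', (1 - X j) :
          MvPolynomial ℕ (ZMod 2)).totalDegree = τ'.card := by
        rw [hgpm, pm_totalDegree (Finset.disjoint_left.mpr (by simp))]
        simp
      have hd2 : (∏ i ∈ Finset.Icc 1 k, (1 - X i) :
          MvPolynomial ℕ (ZMod 2)).totalDegree = k := by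
        rw [hfpm, pm_totalDegree (Finset.disjoint_left.mpr (by simp))]
        simp [hcard_Icc]
      rw [hd1, hd2] at hdeg
      have := Finset.card_le_card hIτ'
      rw [hcard_Icc] at this
      omega
    · obtain ⟨i, hiI, j, hjI, hji, hmod, hne, rfl⟩ := hf
      have hij : i ≠ j := by omega
      have hb1 := Finset.mem_Icc.mp hiI
      have hb2 := Finset.mem_Icc.mp hjI
      have hnc : ¬ covered k i j := by
        intro hcov
        have harith := covered_arith hk hiI hjI hij hcov
        rw [Nat.mod_eq_of_lt (show i - j < k by omega)] at hmod
        have hne' : ¬(i = k ∧ j = 1) := fun hp => hne (by rw [hp.1, hp.2])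
        omega
      have hxpm : (X i * X j : MvPolynomial ℕ (ZMod 2)) = pm {i, j} ∅ := by
        simp [pm, Finset.prod_pair hij]
      have hgJ : pm {i, j} ∅ ∈ neuralIdeal k (cycleCode k) := by
        refine pm_mem (Finset.disjoint_right.mpr (by simp)) ?_ (Finset.empty_subset _) ?_
        · rw [Finset.insert_subset_iff, Finset.singleton_subset_iff]; exact ⟨hiI, hjI⟩
        · intro w hw hmem
          exact hnc ⟨{i, j} ∪ w, hmem, Finset.subset_union_left⟩
      refine ⟨⟨{i, j}, ∅, Finset.disjoint_right.mpr (by simp),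
        by simp [Finset.prod_pair hij]⟩, hxpm ▸ hgJ, ?_⟩
      rintro ⟨g, ⟨σ', τ', hd', rfl⟩, hgJ', hdeg, h, hfac⟩
      have hgpm : (∏ i ∈ σ', X i) * ∏ j ∈ τ', (1 - X j) = pm σ' τ' := rfl
      have hdegf : (X i * X j : MvPolynomial ℕ (ZMod 2)).totalDegree = 2 := by
        rw [hxpm, pm_totalDegree (Finset.disjoint_right.mpr (by simp)),
          Finset.card_pair hij]
        simp
      have hdegg : ((∏ i ∈ σ', X i) * ∏ j ∈ τ', (1 - X j) :
          MvPolynomial ℕ (ZMod 2)).totalDegree = σ'.card + τ'.card := by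
        rw [hgpm]; exact pm_totalDegree hd'
      rw [hdegf, hdegg] at hdeg
      by_cases hσI' : ∀ x ∈ σ', x ∉ Finset.Icc 1 k
      · have := Finset.card_le_card (htau σ' τ' hd' (hgpm ▸ hgJ') hσI')
        rw [hcard_Icc] at this
        omega
      · push_neg at hσI'
        obtain ⟨x, hxσ, hxI⟩ := hσI'
        obtain ⟨y, hyσ, hyI, hyx⟩ := hnotsub σ' τ' hd' (hgpm ▸ hgJ') {x}
          (singleton_mem_code hxI) (Finset.singleton_subset_iff.mpr hxσ)
        rw [Finset.mem_singleton] at hyx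
        have hp : ({y, x} : Finset ℕ) ⊆ σ' := by
          rw [Finset.insert_subset_iff, Finset.singleton_subset_iff]; exact ⟨hyσ, hxσ⟩
        have := Finset.card_le_card hp
        rw [Finset.card_pair hyx] at this
        omega
end
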